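/- arXiv:2206.05232 — 2 statements merged into one kernel-verified Lean document; each statement's English description precedes it below -/
import Mathlib

section
/- Let d, s, r ≥ 1 and let E be a channel on M_s with Kraus operators E_1, …, E_r (so E(X) = Σ_{i=1}^r E_i X E_i* for all X and Σ_{i=1}^r E_i* E_i = I_s). Then the following are equivalent: (A) there exist a subchannel S from M_d to M_s, a subchannel R from M_s to M_d, and a real p > 0 such that R(E(S(X))) = p·X for all X ∈ M_d; (D) there exist an s×d complex matrix S_*, a d×s complex matrix R_*, and complex scalars c_1, …, c_r such that R_* E_i S_* = c_i·I_d for every i = 1, …, r and c_{i₀} ≠ 0 for some i₀. -/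
open Matrix Kronecker BigOperators
open scoped ComplexOrder

noncomputable section

/-- `Mat n` is the space of `n × n` complex matrices. -/
abbrev Mat (n : ℕ) := Matrix (Fin n) (Fin n) ℂ

/-- A subchannel from `M_n` to `M_m`: a map of Kraus form whose Kraus operators satisfy
`∑ Kᴴ K ≤ 1` in the Loewner order. -/
def IsSubchannel {n m : Type} [Fintype n] [DecidableEq n] [Fintype m]
    (Φ : Matrix n n ℂ → Matrix m m ℂ) : Prop :=
  ∃ (k : ℕ) (K : Fin k → Matrix m n ℂ),
    (∀ X, Φ X = ∑ i, K i * X * (K i)ᴴ) ∧ (1 - ∑ i, (K i)ᴴ * K i).PosSemidef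

/-- A channel from `M_n` to `M_m`: a map of Kraus form with `∑ Kᴴ K = 1`. -/
def IsChannel {n m : Type} [Fintype n] [DecidableEq n] [Fintype m]
    (Φ : Matrix n n ℂ → Matrix m m ℂ) : Prop :=
  ∃ (k : ℕ) (K : Fin k → Matrix m n ℂ),
    (∀ X, Φ X = ∑ i, K i * X * (K i)ᴴ) ∧ (∑ i, (K i)ᴴ * K i) = 1

/-- `E` is probabilistically correctable for `ℂ^d`. -/
def ProbCorrectable (d : ℕ) {s : ℕ} (E : Mat s → Mat s) : Prop :=
  ∃ (S : Mat d → Mat s) (R : Mat s → Mat d) (p : ℝ),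
    IsSubchannel S ∧ IsSubchannel R ∧ 0 < p ∧ ∀ X, R (E (S X)) = (p : ℂ) • X

/-- `E` is perfectly correctable for `ℂ^d`. -/
def PerfCorrectable (d : ℕ) {s : ℕ} (E : Mat s → Mat s) : Prop :=
  ∃ (S : Mat d → Mat s) (R : Mat s → Mat d),
    IsSubchannel S ∧ IsSubchannel R ∧ ∀ X, R (E (S X)) = X

/-- The Choi matrix of a map on `M_s`. -/
def choi {s : ℕ} (Φ : Mat s → Mat s) : Matrix (Fin s × Fin s) (Fin s × Fin s) ℂ :=
  ∑ i : Fin s, ∑ j : Fin s, (Φ (single i j 1)) ⊗ₖ (single i j 1)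

/-- `rP d s`: the largest `r` such that every channel on `M_s` with Choi rank at most `r`
is probabilistically correctable for `ℂ^d`. -/
def rP (d s : ℕ) : ℕ :=
  sSup {r : ℕ | ∀ E : Mat s → Mat s, IsChannel E → (choi E).rank ≤ r → ProbCorrectable d E}

/-- `rP1 d s`: the largest `r` such that every channel on `M_s` with Choi rank at most `r`
is perfectly correctable for `ℂ^d`. -/
def rP1 (d s : ℕ) : ℕ :=
  sSup {r : ℕ | ∀ E : Mat s → Mat s, IsChannel E → (choi E).rank ≤ r → PerfCorrectable d E}

/-!
Writing `S`, `E`, `R` in Kraus form, `R ∘ E ∘ S` is the Kraus map with operators `Rⱼ Eᵢ Sₖ`.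
A Kraus map equal to `p • id` has scalar Kraus operators: evaluating it on the matrix units
`single u v 1` shows that off-diagonal entries vanish and diagonal entries agree. Since `p ≠ 0`
one of these scalars is nonzero, and fixing its `j` and `k` gives `R_* = Rⱼ`, `S_* = Sₖ`.
Conversely, nonzero multiples `K = a • S_*`, `L = b • R_*` of operator norm at most `1` are
single Kraus operators of subchannels, and `X ↦ L E(K X Kᴴ) Lᴴ` is `∑ᵢ |a b cᵢ|² • X`.
-/

open scoped Matrix.Norms.L2Operator

section Kraus

variable {R ι κ l m n : Type*} [Fintype ι]

def krausMap [Semiring R] [StarRing R] [Fintype n] (K : ι → Matrix m n R) (X : Matrix n n R) :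
    Matrix m m R :=
  ∑ i, K i * X * (K i)ᴴ

theorem krausMap_krausMap [Semiring R] [StarRing R] [Fintype κ] [Fintype m] [Fintype n]
    (L : κ → Matrix l m R) (K : ι → Matrix m n R) (X : Matrix n n R) :
    krausMap L (krausMap K X) = krausMap (fun x : κ × ι => L x.1 * K x.2) X := by
  simp only [krausMap, Matrix.mul_sum, Matrix.sum_mul, Fintype.sum_prod_type, conjTranspose_mul,
    Matrix.mul_assoc]

theorem mul_krausMap_mul_conjTranspose [Semiring R] [StarRing R] [Fintype m] [Fintype n]
    (L : Matrix l m R) (A : ι → Matrix m m R) (K : Matrix m n R) (X : Matrix n n R) :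
    L * krausMap A (K * X * Kᴴ) * Lᴴ = krausMap (fun i => L * A i * K) X := by
  simp only [krausMap, Matrix.mul_sum, Matrix.sum_mul, conjTranspose_mul, Matrix.mul_assoc]

theorem krausMap_eq_smul_of_eq_smul_one [CommSemiring R] [StarRing R] [Fintype n]
    [DecidableEq n] {A : ι → Matrix n n R} {c : ι → R} (hA : ∀ i, A i = c i • 1) (X : Matrix n n R) :
    krausMap A X = (∑ i, star (c i) * c i) • X := by
  simp only [krausMap, hA, conjTranspose_smul, conjTranspose_one, Matrix.smul_mul, Matrix.mul_smul,
    Matrix.one_mul, Matrix.mul_one, smul_smul, Finset.sum_smul]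

theorem mul_single_mul_conjTranspose_apply [CommSemiring R] [StarRing R] [Fintype n]
    [DecidableEq n] (A B : Matrix m n R) (u v : n) (x y : m) :
    (A * single u v (1 : R) * Bᴴ) x y = A x u * star (B y v) := by
  simp [Matrix.mul_apply, single, mul_ite, ite_mul, ite_and]

theorem sum_mul_star_eq_of_krausMap_eq_smul [CommSemiring R] [StarRing R] [Fintype n]
    [DecidableEq n] {A : ι → Matrix n n R} {p : R} (h : ∀ X, krausMap A X = p • X)
    (u v x y : n) :
    ∑ k, A k x u * star (A k y v) = if x = u ∧ y = v then p else 0 := by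
  have := congrFun (congrFun (h (single u v 1)) x) y
  simp only [krausMap, Matrix.sum_apply, mul_single_mul_conjTranspose_apply] at this
  rw [this]
  simp [single, eq_comm]

variable [CommRing R] [StarRing R] [PartialOrder R] [StarOrderedRing R] [NoZeroDivisors R]
  [Fintype n] [DecidableEq n]

theorem eq_smul_one_of_krausMap_eq_smul {A : ι → Matrix n n R} {p : R}
    (h : ∀ X, krausMap A X = p • X) (k : ι) (i : n) : A k = A k i i • 1 := by
  have hA := sum_mul_star_eq_of_krausMap_eq_smul h
  have eq_zero_of_sum_mul_star {w : ι → R} (hw : ∑ k, w k * star (w k) = 0) : w k = 0 := by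
    refine congrFun (dotProduct_star_self_eq_zero.mp ?_) k
    simpa [dotProduct, mul_comm] using hw
  ext x y
  obtain rfl | hxy := eq_or_ne x y
  · -- each of the four cross sums in `∑ |A k x x - A k i i|²` equals `p`
    have : A k x x - A k i i = 0 := by
      refine eq_zero_of_sum_mul_star (w := fun k => A k x x - A k i i) ?_
      simp only [star_sub, mul_sub, sub_mul, Finset.sum_sub_distrib, hA]
      simp
    simp [sub_eq_zero.mp this]
  · have : A k x y = 0 := eq_zero_of_sum_mul_star (w := fun k => A k x y) <| by
      simp [hA, hxy]
    simp [this, hxy]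

theorem exists_eq_smul_one_of_krausMap_eq_smul [Nonempty n] {A : ι → Matrix n n R} {p : R}
    (h : ∀ X, krausMap A X = p • X) (hp : p ≠ 0) :
    ∃ c : ι → R, (∀ k, A k = c k • 1) ∧ ∃ k, c k ≠ 0 := by
  obtain ⟨i⟩ := ‹Nonempty n›
  have hA := eq_smul_one_of_krausMap_eq_smul h (i := i)
  refine ⟨fun k => A k i i, hA, ?_⟩
  have : Nontrivial R := nontrivial_of_ne p 0 hp
  by_contra! hc
  have := h 1
  simp only [krausMap_eq_smul_of_eq_smul_one (fun k => (hA k).trans (by rw [hc k])), star_zero,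
    mul_zero, Finset.sum_const_zero, zero_smul] at this
  exact one_ne_zero (smul_eq_zero.mp this.symm |>.resolve_left hp)

end Kraus

section Contraction

variable {𝕜 m n : Type*} [RCLike 𝕜] [Fintype m] [Fintype n]

theorem star_dotProduct_self_eq_norm_sq (v : n → 𝕜) :
    star v ⬝ᵥ v = ((‖(EuclideanSpace.equiv n 𝕜).symm v‖ ^ 2 : ℝ) : 𝕜) := by
  rw [RCLike.ofReal_pow, ← inner_self_eq_norm_sq_to_K, EuclideanSpace.inner_eq_star_dotProduct,
    dotProduct_comm]
  rfl

theorem posSemidef_one_sub_conjTranspose_mul_self [DecidableEq n] {A : Matrix m n 𝕜}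
    (hA : ‖A‖ ≤ 1) : (1 - Aᴴ * A).PosSemidef := by
  refine posSemidef_iff_dotProduct_mulVec.mpr
    ⟨isHermitian_one.sub (isHermitian_conjTranspose_mul_self A), fun x => ?_⟩
  have hAx : ‖(EuclideanSpace.equiv m 𝕜).symm (A *ᵥ x)‖ ≤ ‖(EuclideanSpace.equiv n 𝕜).symm x‖ :=
    (l2_opNorm_mulVec A _).trans (mul_le_of_le_one_left (norm_nonneg _) hA)
  rw [sub_mulVec, one_mulVec, dotProduct_sub, ← mulVec_mulVec, dotProduct_mulVec,
    vecMul_conjTranspose, star_star, star_dotProduct_self_eq_norm_sq,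
    star_dotProduct_self_eq_norm_sq, ← RCLike.ofReal_sub, RCLike.ofReal_nonneg, sub_nonneg]
  gcongr

theorem exists_ne_zero_l2_opNorm_smul_le_one [DecidableEq n] (A : Matrix m n 𝕜) :
    ∃ c : 𝕜, c ≠ 0 ∧ ‖c • A‖ ≤ 1 := by
  refine ⟨((‖A‖ + 1)⁻¹ : ℝ), RCLike.ofReal_ne_zero.mpr (by positivity), ?_⟩
  rw [norm_smul, RCLike.norm_ofReal, abs_of_pos (by positivity), inv_mul_le_one₀ (by positivity)]
  linarith

end Contraction

theorem isSubchannel_mul_mul_conjTranspose {m n : Type} [Fintype m] [Fintype n] [DecidableEq n]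
    {K : Matrix m n ℂ} (hK : ‖K‖ ≤ 1) : IsSubchannel fun X : Matrix n n ℂ => K * X * Kᴴ :=
  ⟨1, fun _ => K, fun X => by simp, by simpa using posSemidef_one_sub_conjTranspose_mul_self hK⟩

theorem stmt_0_general (d s r : ℕ) (hd : 1 ≤ d)
    (E : Mat s → Mat s) (Ek : Fin r → Mat s)
    (hEk : ∀ X, E X = ∑ i, Ek i * X * (Ek i)ᴴ) :
    ProbCorrectable d E ↔
      ∃ (Sstar : Matrix (Fin s) (Fin d) ℂ) (Rstar : Matrix (Fin d) (Fin s) ℂ)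
        (c : Fin r → ℂ),
        (∀ i, Rstar * Ek i * Sstar = c i • (1 : Mat d)) ∧ ∃ i₀, c i₀ ≠ 0 := by
  obtain rfl : E = krausMap Ek := funext hEk
  constructor
  · rintro ⟨S, R, p, ⟨_, Ks, hS, -⟩, ⟨_, Kr, hR, -⟩, hp, hRES⟩
    have : Nonempty (Fin d) := Fin.pos_iff_nonempty.mp hd
    have hA : ∀ X, krausMap (fun x : _ × Fin r × _ => Kr x.1 * (Ek x.2.1 * Ks x.2.2)) X =
        (p : ℂ) • X := by
      intro X
      calc _ = krausMap Kr (krausMap Ek (krausMap Ks X)) := by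
            rw [krausMap_krausMap Ek, krausMap_krausMap]
        _ = R (krausMap Ek (S X)) := by rw [hR, hS]; rfl
        _ = (p : ℂ) • X := hRES X
    obtain ⟨c, hc, ⟨j, i₀, k⟩, hc₀⟩ :=
      exists_eq_smul_one_of_krausMap_eq_smul hA (by exact_mod_cast hp.ne')
    exact ⟨Ks k, Kr j, fun i => c (j, i, k), fun i => (Matrix.mul_assoc ..).trans (hc (j, i, k)),
      i₀, hc₀⟩
  · rintro ⟨S', R', c, hc, i₀, hi₀⟩
    obtain ⟨a, ha, haS⟩ := exists_ne_zero_l2_opNorm_smul_le_one S'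
    obtain ⟨b, hb, hbR⟩ := exists_ne_zero_l2_opNorm_smul_le_one R'
    have hscalar : ∀ i, b • R' * Ek i * a • S' = (b * a * c i) • 1 := fun i => by
      rw [Matrix.smul_mul, Matrix.smul_mul, Matrix.mul_smul, hc, smul_smul, smul_smul]
    refine ⟨fun X => a • S' * X * (a • S')ᴴ, fun Y => b • R' * Y * (b • R')ᴴ,
      ∑ i, Complex.normSq (b * a * c i), isSubchannel_mul_mul_conjTranspose haS,
      isSubchannel_mul_mul_conjTranspose hbR, ?_, fun X => ?_⟩
    · exact Finset.sum_pos' (fun i _ => Complex.normSq_nonneg _)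
        ⟨i₀, Finset.mem_univ _, Complex.normSq_pos.mpr (by simp [ha, hb, hi₀])⟩
    · dsimp only
      rw [mul_krausMap_mul_conjTranspose, krausMap_eq_smul_of_eq_smul_one hscalar]
      push_cast [Complex.normSq_eq_conj_mul_self]
      rfl

/-- Theorem 1 (A) ⟺ (D): a channel with Kraus operators `Ek` is probabilistically
correctable for `ℂ^d` iff there are `S_*`, `R_*` with `R_* Eᵢ S_* = cᵢ • 1` and some `c_{i₀} ≠ 0`. -/
theorem stmt_0 (d s r : ℕ) (hd : 1 ≤ d) (hs : 1 ≤ s) (hr : 1 ≤ r)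
    (E : Mat s → Mat s) (Ek : Fin r → Mat s)
    (hEk : ∀ X, E X = ∑ i, Ek i * X * (Ek i)ᴴ)
    (hTP : ∑ i, (Ek i)ᴴ * Ek i = 1) :
    ProbCorrectable d E ↔
      ∃ (Sstar : Matrix (Fin s) (Fin d) ℂ) (Rstar : Matrix (Fin d) (Fin s) ℂ)
        (c : Fin r → ℂ),
        (∀ i, Rstar * Ek i * Sstar = c i • (1 : Mat d)) ∧ ∃ i₀, c i₀ ≠ 0 :=
  stmt_0_general d s r hd E Ek hEk
end
end

section
/- Let d ≥ 1 and let E be a channel on M_d. Then E is probabilistically correctable for ℂ^d if and only if E is perfectly correctable for ℂ^d; that is, ξ(d,d) = ξ₁(d,d). -/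
/-!
If `R ∘ E ∘ S = p • id` with Kraus operators `Rᵢ, Eₖ, Sⱼ`, then the products `Rᵢ Eₖ Sⱼ` are Kraus
operators of `p • id`, and comparing matrix entries shows that each of them is a scalar matrix.
Since `p ≠ 0`, one of these scalars `cᵢₖⱼ` is nonzero, which forces `Rᵢ` and `Sⱼ` to be
invertible; hence every `Eₖ` is a multiple of the single matrix `U = Rᵢ⁻¹ Sⱼ⁻¹`. Trace
preservation then makes a positive multiple of `U` unitary, so `E` is a unitary conjugation,
which is undone perfectly by the inverse conjugation.
-/

open Matrix Kronecker BigOperators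
open scoped ComplexOrder

noncomputable section

section Kraus

variable {n : Type} [Fintype n]

lemma mul_single_mul_apply {α l m o : Type} [Semiring α] [DecidableEq n] [Fintype m]
    [DecidableEq m] (M : Matrix l n α) (N : Matrix m o α) (a : n) (a' : m) (c : α) (b : l)
    (b' : o) : (M * single a a' c * N) b b' = M b a * c * N a' b' := by
  simp [Matrix.mul_apply, Matrix.single, ite_and]

lemma kraus_sum_comp {l m : Type} {ι κ : Type} [Fintype m] [Fintype ι] [Fintype κ]
    (A : ι → Matrix l m ℂ) (B : κ → Matrix m n ℂ) (X : Matrix n n ℂ) :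
    ∑ i, A i * (∑ j, B j * X * (B j)ᴴ) * (A i)ᴴ =
      ∑ t : ι × κ, (A t.1 * B t.2) * X * (A t.1 * B t.2)ᴴ := by
  simp only [Matrix.mul_sum, Matrix.sum_mul, Fintype.sum_prod_type, conjTranspose_mul,
    Matrix.mul_assoc]

lemma eq_zero_of_sum_mul_star_self_eq_zero {ι : Type} [Fintype ι] {z : ι → ℂ}
    (h : ∑ t, z t * star (z t) = 0) (t : ι) : z t = 0 :=
  (CStarRing.mul_star_self_eq_zero_iff _).mp <|
    (Finset.sum_eq_zero_iff_of_nonneg fun t _ => mul_star_self_nonneg (z t)).mp h t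
      (Finset.mem_univ t)

theorem exists_eq_smul_one_of_kraus_sum_eq_smul [DecidableEq n] {ι : Type} [Fintype ι]
    (A : ι → Matrix n n ℂ) (p : ℂ) (h : ∀ X, ∑ t, A t * X * (A t)ᴴ = p • X) (t : ι) :
    ∃ c : ℂ, A t = c • 1 := by
  have hent : ∀ a a' b b', ∑ t, A t b a * star (A t b' a') = p * single a a' 1 b b' := by
    intro a a' b b'
    simpa [Matrix.sum_apply, mul_single_mul_apply] using congr_fun₂ (h (single a a' 1)) b b'
  have hoff : ∀ a b, b ≠ a → A t b a = 0 := fun a b hba =>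
    eq_zero_of_sum_mul_star_self_eq_zero (by simpa [hba.symm] using hent a a b b) t
  -- `∑ₜ |Aₜ a a - Aₜ b b|² = p - p - p + p`
  have hdiag : ∀ a b, A t a a = A t b b := by
    intro a b
    refine sub_eq_zero.mp <|
      eq_zero_of_sum_mul_star_self_eq_zero (z := fun t => A t a a - A t b b) ?_ t
    simp only [star_sub, sub_mul, mul_sub, Finset.sum_sub_distrib, hent]
    simp
  rcases isEmpty_or_nonempty n with _ | ⟨⟨a₀⟩⟩
  · exact ⟨0, Subsingleton.elim _ _⟩
  refine ⟨A t a₀ a₀, ?_⟩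
  ext a b
  rcases eq_or_ne a b with rfl | hab
  · simp [hdiag a a₀]
  · simp [hoff b a hab, hab]

lemma exists_eq_smul_of_mul_mul_eq_smul_one {𝕜 κ : Type} [Field 𝕜] [DecidableEq n]
    {R S : Matrix n n 𝕜} {K : κ → Matrix n n 𝕜} {c : κ → 𝕜}
    (hc : ∀ k, R * K k * S = c k • 1) {k₀ : κ} (hk₀ : c k₀ ≠ 0) :
    ∃ U, ∀ k, K k = c k • U := by
  have hR : IsUnit R.det := isUnit_det_of_right_inverse (B := (c k₀)⁻¹ • (K k₀ * S)) <| by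
    rw [Matrix.mul_smul, ← Matrix.mul_assoc, hc, smul_smul, inv_mul_cancel₀ hk₀, one_smul]
  have hS : IsUnit S.det := isUnit_det_of_left_inverse (B := (c k₀)⁻¹ • (R * K k₀)) <| by
    rw [Matrix.smul_mul, hc, smul_smul, inv_mul_cancel₀ hk₀, one_smul]
  refine ⟨R⁻¹ * S⁻¹, fun k => ?_⟩
  calc K k = R⁻¹ * (R * K k * S) * S⁻¹ := by
        rw [Matrix.mul_assoc R, nonsing_inv_mul_cancel_left _ _ hR,
          mul_nonsing_inv_cancel_right _ _ hS]
    _ = c k • (R⁻¹ * S⁻¹) := by rw [hc, Matrix.mul_smul, Matrix.mul_one, Matrix.smul_mul]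

lemma smul_mul_mul_conjTranspose_smul {l m : Type} [Fintype m] (c : ℂ) (A : Matrix l m ℂ)
    (X : Matrix m m ℂ) : (c • A) * X * (c • A)ᴴ = (c * star c) • (A * X * Aᴴ) := by
  rw [conjTranspose_smul, Matrix.smul_mul, Matrix.smul_mul, Matrix.mul_smul, smul_smul]

lemma conjTranspose_smul_mul_smul {m : Type} [Fintype m] (c : ℂ) (A : Matrix m m ℂ) :
    (c • A)ᴴ * (c • A) = (c * star c) • (Aᴴ * A) := by
  rw [conjTranspose_smul, Matrix.smul_mul, Matrix.mul_smul, smul_smul, mul_comm]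

lemma exists_mul_star_eq_sum_mul_star {κ : Type} [Fintype κ] (γ : κ → ℂ) :
    ∃ c : ℂ, c * star c = ∑ k, γ k * star (γ k) := by
  refine ⟨Real.sqrt (∑ k, Complex.normSq (γ k)), ?_⟩
  simp only [Complex.star_def, Complex.mul_conj, Complex.normSq_ofReal,
    Real.mul_self_sqrt (Finset.sum_nonneg fun k _ => Complex.normSq_nonneg (γ k))]
  push_cast
  rfl

theorem exists_unitary_of_kraus_eq_smul {κ : Type} [Fintype κ] [DecidableEq n]
    (U : Matrix n n ℂ) (γ : κ → ℂ) (hK : ∑ k, (γ k • U)ᴴ * (γ k • U) = 1) :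
    ∃ V ∈ unitaryGroup n ℂ, ∀ X, ∑ k, (γ k • U) * X * (γ k • U)ᴴ = V * X * Vᴴ := by
  obtain ⟨c, hc⟩ := exists_mul_star_eq_sum_mul_star γ
  refine ⟨c • U, ?_, fun X => ?_⟩
  · rw [mem_unitaryGroup_iff', star_eq_conjTranspose, ← hK, conjTranspose_smul_mul_smul, hc,
      Finset.sum_smul]
    simp only [conjTranspose_smul_mul_smul]
  · rw [smul_mul_mul_conjTranspose_smul, hc, Finset.sum_smul]
    simp only [smul_mul_mul_conjTranspose_smul]

lemma isSubchannel_conj_of_mem_unitaryGroup [DecidableEq n] {V : Matrix n n ℂ}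
    (hV : V ∈ unitaryGroup n ℂ) : IsSubchannel fun X => V * X * Vᴴ := by
  refine ⟨1, fun _ => V, fun X => by simp, ?_⟩
  simpa [← star_eq_conjTranspose, mem_unitaryGroup_iff'.mp hV] using PosSemidef.zero

end Kraus

lemma PerfCorrectable.probCorrectable {d s : ℕ} {E : Mat s → Mat s} (h : PerfCorrectable d E) :
    ProbCorrectable d E :=
  let ⟨S, R, hS, hR, hRES⟩ := h
  ⟨S, R, 1, hS, hR, one_pos, fun X => by simp [hRES]⟩

lemma perfCorrectable_of_eq_conj_unitary {d : ℕ} {E : Mat d → Mat d} {V : Mat d}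
    (hV : V ∈ unitaryGroup (Fin d) ℂ) (hE : ∀ X, E X = V * X * Vᴴ) : PerfCorrectable d E := by
  refine ⟨fun X => X, fun X => Vᴴ * X * V, ?_, ?_, fun X => ?_⟩
  · simpa using isSubchannel_conj_of_mem_unitaryGroup (one_mem (unitaryGroup (Fin d) ℂ))
  · simpa [star_eq_conjTranspose] using
      isSubchannel_conj_of_mem_unitaryGroup (Unitary.star_mem hV)
  · have hVV : Vᴴ * V = 1 := mem_unitaryGroup_iff'.mp hV
    simp only [hE]
    rw [← Matrix.mul_assoc, ← Matrix.mul_assoc, hVV, Matrix.one_mul, Matrix.mul_assoc, hVV,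
      Matrix.mul_one]

theorem exists_unitary_of_probCorrectable {d : ℕ} {E : Mat d → Mat d} (hE : IsChannel E)
    (h : ProbCorrectable d E) : ∃ V ∈ unitaryGroup (Fin d) ℂ, ∀ X, E X = V * X * Vᴴ := by
  rcases isEmpty_or_nonempty (Fin d) with _ | _
  · exact ⟨1, one_mem _, fun X => Subsingleton.elim _ _⟩
  obtain ⟨S, R, p, ⟨_, Sk, hS, -⟩, ⟨_, Rk, hR, -⟩, hp, hRES⟩ := h
  obtain ⟨_, Ek, hE, hEsum⟩ := hE
  have hA : ∀ X, ∑ t : (_ × _) × _, Rk t.1.1 * Ek t.1.2 * Sk t.2 * X *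
      (Rk t.1.1 * Ek t.1.2 * Sk t.2)ᴴ = (p : ℂ) • X := fun X => by
    rw [← hRES X, hS, hE, hR, kraus_sum_comp, kraus_sum_comp]
  choose c hc using exists_eq_smul_one_of_kraus_sum_eq_smul _ _ hA
  obtain ⟨⟨⟨i, k⟩, j⟩, hc0⟩ : ∃ t, c t ≠ 0 := by
    by_contra! h0
    have := hA 1
    simp only [hc, h0, zero_smul, Matrix.zero_mul, Finset.sum_const_zero] at this
    rw [eq_comm, smul_eq_zero, Complex.ofReal_eq_zero] at this
    exact this.elim hp.ne' one_ne_zero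
  obtain ⟨U, hU⟩ := exists_eq_smul_of_mul_mul_eq_smul_one (R := Rk i) (S := Sk j) (K := Ek)
    (c := fun k => c ((i, k), j)) (fun k => hc ((i, k), j)) hc0
  obtain rfl : Ek = fun k => c ((i, k), j) • U := funext hU
  obtain ⟨V, hV, hEV⟩ := exists_unitary_of_kraus_eq_smul U _ hEsum
  exact ⟨V, hV, fun X => (hE X).trans (hEV X)⟩

theorem stmt_7_general (d : ℕ) (E : Mat d → Mat d) (hE : IsChannel E) :
    ProbCorrectable d E ↔ PerfCorrectable d E :=
  ⟨fun h => let ⟨_, hV, hEV⟩ := exists_unitary_of_probCorrectable hE h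
    perfCorrectable_of_eq_conj_unitary hV hEV, PerfCorrectable.probCorrectable⟩

/-- Proposition 3 (D): for `s = d`, probabilistic and perfect correctability coincide. -/
theorem stmt_7 (d : ℕ) (hd : 1 ≤ d) (E : Mat d → Mat d) (hE : IsChannel E) :
    ProbCorrectable d E ↔ PerfCorrectable d E :=
  stmt_7_general d E hE
end
end
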